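/- arXiv:1604.06789 — 5 statements merged into one kernel-verified Lean document; each statement's English description precedes it below -/
import Mathlib

section
/- Suppose in addition that Z_{abcd}(x) = 0 for all x ∈ ℝⁿ₊ and all indices a,b,c,d, and that ∂ₙH_{ij}(x) = 0 for all x ∈ ∂ℝⁿ₊ and all i,j ∈ {1,…,n−1}. Then H_{ab}(x) = 0 for all x ∈ ℝⁿ₊ and all a,b (equivalently, every coefficient h_{ab,α} vanishes). (Lemma 1 of Almaraz–Sun.) -/
open MeasureTheory

noncomputable section

/-- Euclidean space `ℝⁿ`. -/
abbrev Euc (n : ℕ) : Type := EuclideanSpace ℝ (Fin n)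

/-- The partial derivative `∂ₐ f` of a function `f : ℝⁿ → ℝ`. -/
noncomputable def pd {n : ℕ} (a : Fin n) (f : Euc n → ℝ) (x : Euc n) : ℝ :=
  fderiv ℝ f x (EuclideanSpace.single a 1)

/-- The degree `|α|` of a multi-index `α` (with entries bounded by `d`). -/
def mdeg {n d : ℕ} (α : Fin n → Fin (d + 1)) : ℕ := ∑ i, (α i : ℕ)

/-- The set of multi-indices `α` with `1 ≤ |α| ≤ d`. -/
def idxSet (n d : ℕ) : Finset (Fin n → Fin (d + 1)) :=
  Finset.univ.filter fun α => 1 ≤ mdeg α ∧ mdeg α ≤ d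

/-- The polynomial tensor `H_{ab}(x) = Σ_{1 ≤ |α| ≤ d} h_{ab,α} x^α`. -/
noncomputable def Hpoly {n d : ℕ} (h : Fin n → Fin n → (Fin n → Fin (d + 1)) → ℝ)
    (a b : Fin n) (x : Euc n) : ℝ :=
  ∑ α ∈ idxSet n d, h a b α * ∏ i, x i ^ (α i : ℕ)

/-- The algebraic Schouten tensor
`A_{ac} = ∂_c∂_e H_{ae} + ∂_a∂_e H_{ce} − ∂_e∂_e H_{ac} − (n−1)⁻¹ ∂_e∂_f H_{ef} δ_{ac}`
(repeated indices summed). -/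
noncomputable def Atensor {n d : ℕ} (h : Fin n → Fin n → (Fin n → Fin (d + 1)) → ℝ)
    (a c : Fin n) (x : Euc n) : ℝ :=
  (∑ e, pd c (pd e (Hpoly h a e)) x) + (∑ e, pd a (pd e (Hpoly h c e)) x)
    - (∑ e, pd e (pd e (Hpoly h a c)) x)
    - ((n : ℝ) - 1)⁻¹ * (∑ e, ∑ f, pd e (pd f (Hpoly h e f)) x)
        * (if a = c then (1 : ℝ) else 0)

/-- The algebraic Weyl tensor
`Z_{abcm} = ∂_b∂_m H_{ac} − ∂_b∂_c H_{am} + ∂_a∂_c H_{mb} − ∂_a∂_m H_{bc}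
  + (n−2)⁻¹ (A_{ac}δ_{bm} − A_{am}δ_{bc} + A_{bm}δ_{ac} − A_{bc}δ_{mb})`. -/
noncomputable def Ztensor {n d : ℕ} (h : Fin n → Fin n → (Fin n → Fin (d + 1)) → ℝ)
    (a b c m : Fin n) (x : Euc n) : ℝ :=
  pd b (pd m (Hpoly h a c)) x - pd b (pd c (Hpoly h a m)) x
    + pd a (pd c (Hpoly h m b)) x - pd a (pd m (Hpoly h b c)) x
    + ((n : ℝ) - 2)⁻¹ *
      (Atensor h a c x * (if b = m then (1 : ℝ) else 0)
        - Atensor h a m x * (if b = c then (1 : ℝ) else 0)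
        + Atensor h b m x * (if a = c then (1 : ℝ) else 0)
        - Atensor h b c x * (if m = b then (1 : ℝ) else 0))

/-!
All data are polynomial, so the theorem is an identity for the polynomial tensor `P_{ab}`.
Because `P_{an} = 0`, the Weyl components `Z_{n i j n}` give
`∂ₙ∂ₙ P_{ij} = c δ_{ij} ∂_e∂_f P_{ef}`, and tracelessness kills `∂_e∂_f P_{ef}`; so
`∂ₙ∂ₙ P = 0`, which the boundary condition upgrades to `∂ₙ P = 0`. Then the tangency condition
`x_j P_{ij} = 0` spreads from `∂ℝⁿ₊` to all of `ℝⁿ`, the components `Z_{a n c n}` show that the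
Schouten tensor vanishes, and hence so does the linearised Riemann tensor. Contracting the latter
with `x` and using `x_a P_{ia} = 0`, the difference `∂_b P_{ac} − ∂_a P_{bc}` is killed by
`x·∇ + 1`, which is injective on polynomials; so it vanishes, and then `(x·∇ + 1) P_{ac} = 0`
forces `P = 0`.
-/

namespace MvPolynomial

section

variable {R σ : Type*} [CommSemiring R]

theorem pderiv_pderiv_comm (i j : σ) (p : MvPolynomial σ R) :
    pderiv i (pderiv j p) = pderiv j (pderiv i p) := by
  induction p using MvPolynomial.induction_on with
  | C r => simp
  | add p q hp hq => simp [hp, hq]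
  | mul_X p k hp =>
    rcases eq_or_ne k i with rfl | hi <;> rcases eq_or_ne k j with rfl | hj <;>
      simp [pderiv_X_of_ne, *] <;> ring

theorem pderiv_sum_X_mul [Fintype σ] [DecidableEq σ] (i : σ) (f : σ → MvPolynomial σ R) :
    pderiv i (∑ j, X j * f j) = f i + ∑ j, X j * pderiv i (f j) := by
  simp [Pi.single_apply, Finset.sum_add_distrib, add_comm]

theorem coeff_sum_X_mul_pderiv [Fintype σ] (p : MvPolynomial σ R) (s : σ →₀ ℕ) :
    coeff s (∑ i, X i * pderiv i p) = (∑ i, s i : ℕ) * coeff s p := by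
  classical
  induction p using MvPolynomial.induction_on' with
  | add p q hp hq => simp only [map_add, mul_add, Finset.sum_add_distrib, coeff_add, hp, hq]
  | monomial m r =>
    simp only [X_mul_pderiv_monomial, ← Finset.sum_smul, coeff_smul, coeff_monomial]
    split_ifs with h <;> simp [h]

theorem eval_update_of_notMem_vars [DecidableEq σ] {i : σ} {p : MvPolynomial σ R}
    (h : i ∉ p.vars) (x : σ → R) (t : R) : eval (Function.update x i t) p = eval x p :=
  hom_congr_vars (by ext; simp) (fun j hj _ => by
    simp [Function.update_of_ne (ne_of_mem_of_not_mem hj h)]) rfl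

end

section

variable {R σ : Type*} [CommRing R] [IsDomain R] [CharZero R]

theorem eq_zero_of_sum_X_mul_pderiv_add_self_eq_zero [Fintype σ] {p : MvPolynomial σ R}
    (h : ∑ i, X i * pderiv i p + p = 0) : p = 0 := by
  ext s
  have hs := congrArg (coeff s) h
  rw [coeff_add, coeff_sum_X_mul_pderiv, coeff_zero, ← add_one_mul] at hs
  exact (mul_eq_zero.1 hs).resolve_left (Nat.cast_add_one_ne_zero _)

theorem notMem_vars_of_pderiv_eq_zero {i : σ} {p : MvPolynomial σ R} (h : pderiv i p = 0) :
    i ∉ p.vars := by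
  rw [mem_vars_iff_mem_support]
  rintro ⟨s, hs, hi⟩
  have hc := coeff_pderiv (i := i) p (s - Finsupp.single i 1)
  rw [h, coeff_zero, tsub_add_cancel_of_le (Finsupp.single_le_iff.2 (Nat.pos_of_ne_zero
    (Finsupp.mem_support_iff.1 hi)))] at hc
  exact (mul_eq_zero.1 hc.symm).elim (mem_support_iff.1 hs) (Nat.cast_add_one_ne_zero _)

theorem eq_zero_of_pderiv_eq_zero_of_eval_eq_zero [DecidableEq σ] {i : σ}
    {p : MvPolynomial σ R} (hd : pderiv i p = 0) (h : ∀ x : σ → R, x i = 0 → eval x p = 0) :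
    p = 0 :=
  funext fun x => by
    rw [← eval_update_of_notMem_vars (notMem_vars_of_pderiv_eq_zero hd) x 0, map_zero]
    exact h _ (by simp)

theorem eq_zero_of_eval_eq_zero_of_apply_mem [DecidableEq σ] {i : σ} {S : Set R}
    (hS : S.Infinite) {p : MvPolynomial σ R} (h : ∀ x : σ → R, x i ∈ S → eval x p = 0) :
    p = 0 :=
  funext_set (Function.update (fun _ => Set.univ) i S)
    (fun j => by rcases eq_or_ne j i with rfl | hj <;> simp [*, Set.infinite_univ])
    fun x hx => by simpa using h x (by simpa using hx i trivial)

end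

end MvPolynomial

namespace AlmarazSun

open MvPolynomial

variable {K : Type*} [Field K] {n : ℕ}

def doubleDiv (P : Fin n → Fin n → MvPolynomial (Fin n) K) : MvPolynomial (Fin n) K :=
  ∑ e, ∑ f, pderiv e (pderiv f (P e f))

def schouten (P : Fin n → Fin n → MvPolynomial (Fin n) K) (a c : Fin n) :
    MvPolynomial (Fin n) K :=
  (∑ e, pderiv c (pderiv e (P a e))) + (∑ e, pderiv a (pderiv e (P c e)))
    - (∑ e, pderiv e (pderiv e (P a c)))
    - C ((n : K) - 1)⁻¹ * doubleDiv P * (if a = c then 1 else 0)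

def riemann (P : Fin n → Fin n → MvPolynomial (Fin n) K) (a b c m : Fin n) :
    MvPolynomial (Fin n) K :=
  pderiv b (pderiv m (P a c)) - pderiv b (pderiv c (P a m))
    + pderiv a (pderiv c (P m b)) - pderiv a (pderiv m (P b c))

def weyl (P : Fin n → Fin n → MvPolynomial (Fin n) K) (a b c m : Fin n) :
    MvPolynomial (Fin n) K :=
  riemann P a b c m + C ((n : K) - 2)⁻¹ *
    (schouten P a c * (if b = m then 1 else 0) - schouten P a m * (if b = c then 1 else 0)
      + schouten P b m * (if a = c then 1 else 0) - schouten P b c * (if m = b then 1 else 0))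

variable {P : Fin n → Fin n → MvPolynomial (Fin n) K} {ell : Fin n}

theorem pderiv_pderiv_normal_eq_of_weyl_eq_zero (hsym : ∀ a b, P a b = P b a)
    (hP : ∀ a, P a ell = 0) {i j : Fin n} (hi : i ≠ ell) (hj : j ≠ ell)
    (hW : weyl P ell i j ell = 0) :
    pderiv ell (pderiv ell (P i j))
      = C (((n : K) - 2)⁻¹ * ((n : K) - 1)⁻¹) * doubleDiv P * (if i = j then 1 else 0) := by
  have hP' : ∀ a, P ell a = 0 := fun a => (hsym ell a).trans (hP a)
  simp only [weyl, riemann, schouten, hP, hP', map_zero, if_neg hi, if_neg (Ne.symm hi),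
    if_neg (Ne.symm hj), if_true, Finset.sum_const_zero, mul_zero, mul_one, zero_add, zero_sub,
    sub_zero, add_zero] at hW
  rw [C_mul]
  linear_combination -hW

theorem doubleDiv_eq_zero [CharZero K] (hn : 3 ≤ n) (hsym : ∀ a b, P a b = P b a)
    (htr : ∑ a, P a a = 0) (hP : ∀ a, P a ell = 0) (hW : ∀ i, weyl P ell i i ell = 0) :
    doubleDiv P = 0 := by
  have hsum : ∑ i ∈ Finset.univ.erase ell, P i i = 0 := by
    rw [Finset.sum_erase (f := fun i => P i i) _ (hP ell), htr]
  have h := congrArg (fun p => pderiv ell (pderiv ell p)) hsum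
  simp only [map_sum, map_zero] at h
  rw [Finset.sum_congr rfl fun i hi => pderiv_pderiv_normal_eq_of_weyl_eq_zero hsym hP
    (Finset.ne_of_mem_erase hi) (Finset.ne_of_mem_erase hi) (hW i)] at h
  simp only [if_true, mul_one, Finset.sum_const, Finset.card_erase_of_mem (Finset.mem_univ _),
    Finset.card_univ, Fintype.card_fin, nsmul_eq_mul, ← C_eq_coe_nat, ← mul_assoc,
    ← C_mul] at h
  have hK : ((n - 1 : ℕ) : K) * ((n : K) - 2)⁻¹ * ((n : K) - 1)⁻¹ ≠ 0 := by
    have h1 : ((n - 1 : ℕ) : K) ≠ 0 := Nat.cast_ne_zero.2 (by omega)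
    have h2 : (n : K) - 2 ≠ 0 := sub_ne_zero.2 (by exact_mod_cast (by omega : n ≠ 2))
    have h3 : (n : K) - 1 ≠ 0 := sub_ne_zero.2 (by exact_mod_cast (by omega : n ≠ 1))
    exact mul_ne_zero (mul_ne_zero h1 (inv_ne_zero h2)) (inv_ne_zero h3)
  exact (mul_eq_zero.1 h).resolve_left (C_ne_zero.2 hK)

theorem pderiv_pderiv_normal_eq_zero (hsym : ∀ a b, P a b = P b a) (hP : ∀ a, P a ell = 0)
    (hQ : doubleDiv P = 0) (hW : ∀ i j, weyl P ell i j ell = 0) (a b : Fin n) :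
    pderiv ell (pderiv ell (P a b)) = 0 := by
  rcases eq_or_ne a ell with rfl | ha
  · simp [hsym a b, hP]
  rcases eq_or_ne b ell with rfl | hb
  · simp [hP]
  simp [pderiv_pderiv_normal_eq_of_weyl_eq_zero hsym hP ha hb (hW a b), hQ]

theorem pderiv_normal_eq_zero [CharZero K] (hsym : ∀ a b, P a b = P b a) (hP : ∀ a, P a ell = 0)
    (hdd : ∀ a b, pderiv ell (pderiv ell (P a b)) = 0)
    (hbd : ∀ i j, i ≠ ell → j ≠ ell → ∀ x : Fin n → K, x ell = 0 →
      eval x (pderiv ell (P i j)) = 0) (a b : Fin n) :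
    pderiv ell (P a b) = 0 := by
  rcases eq_or_ne a ell with rfl | ha
  · simp [hsym a b, hP]
  rcases eq_or_ne b ell with rfl | hb
  · simp [hP]
  exact eq_zero_of_pderiv_eq_zero_of_eval_eq_zero (hdd a b) (hbd a b ha hb)

theorem sum_X_mul_eq_zero [CharZero K] (hsym : ∀ a b, P a b = P b a) (hP : ∀ a, P a ell = 0)
    (hd : ∀ a b, pderiv ell (P a b) = 0)
    (htang : ∀ i, i ≠ ell → ∀ x : Fin n → K, x ell = 0 →
      ∑ j ∈ Finset.univ.erase ell, x j * eval x (P i j) = 0) (i : Fin n) :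
    ∑ a, X a * P i a = 0 := by
  rcases eq_or_ne i ell with rfl | hi
  · simp [hsym i, hP]
  refine eq_zero_of_pderiv_eq_zero_of_eval_eq_zero (i := ell) ?_ fun x hx => ?_
  · rw [pderiv_sum_X_mul, hP]
    simp [hd]
  · simp only [map_sum, map_mul, eval_X]
    rw [← Finset.sum_erase _ (by rw [hP, map_zero, mul_zero]), htang i hi x hx]

theorem schouten_eq_zero [CharZero K] (hn : 3 ≤ n) (hsym : ∀ a b, P a b = P b a)
    (hP : ∀ a, P a ell = 0) (hd : ∀ a b, pderiv ell (P a b) = 0) (hQ : doubleDiv P = 0)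
    (hW : ∀ a c, weyl P a ell c ell = 0) (a c : Fin n) :
    schouten P a c = 0 := by
  have hP' : ∀ a, P ell a = 0 := fun a => (hsym ell a).trans (hP a)
  have hd' : ∀ a b e, pderiv ell (pderiv e (P a b)) = 0 := fun a b e => by
    rw [pderiv_pderiv_comm, hd, map_zero]
  have hA : ∀ a, schouten P ell a = 0 ∧ schouten P a ell = 0 := fun a => by
    simp [schouten, hP, hP', hd', hQ]
  rcases eq_or_ne a ell with rfl | ha
  · exact (hA c).1
  rcases eq_or_ne c ell with rfl | hc
  · exact (hA a).2
  have h := hW a c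
  simp only [weyl, riemann, hP, hP', hd, (hA _).1, (hA _).2, map_zero, if_true,
    if_neg hc.symm, mul_one, mul_zero, zero_mul, sub_zero, add_zero, sub_self, zero_add] at h
  have h2 : (n : K) - 2 ≠ 0 := sub_ne_zero.2 (by exact_mod_cast (by omega : n ≠ 2))
  exact (mul_eq_zero.1 h).resolve_left (C_ne_zero.2 (inv_ne_zero h2))

theorem riemann_eq_weyl (hA : ∀ a c, schouten P a c = 0) (a b c m : Fin n) :
    riemann P a b c m = weyl P a b c m := by
  simp [weyl, hA]

theorem pderiv_comm_of_riemann_eq_zero [CharZero K] (hsym : ∀ a b, P a b = P b a)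
    (hrad : ∀ i, ∑ a, X a * P i a = 0) (hR : ∀ a b c m, riemann P a b c m = 0)
    (a b c : Fin n) :
    pderiv b (P a c) = pderiv a (P b c) := by
  have hrad2 : ∀ i b c, pderiv c (P i b) + pderiv b (P i c)
      + ∑ a, X a * pderiv c (pderiv b (P i a)) = 0 := fun i b c => by
    have h := congrArg (fun p => pderiv c (pderiv b p)) (hrad i)
    simp only [pderiv_sum_X_mul, map_add, map_zero] at h
    linear_combination h
  have hcontr : ∑ m, X m * riemann P a b c m = 0 := by simp [hR]
  have hcomm : ∀ i j k, ∑ m, X m * pderiv m (pderiv i (P j k))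
      = ∑ m, X m * pderiv i (pderiv m (P j k)) := fun i j k =>
    Finset.sum_congr rfl fun m _ => by rw [pderiv_pderiv_comm]
  have hsym' : ∑ m, X m * pderiv a (pderiv c (P m b))
      = ∑ m, X m * pderiv a (pderiv c (P b m)) :=
    Finset.sum_congr rfl fun m _ => by rw [hsym]
  simp only [riemann, mul_sub, mul_add, Finset.sum_sub_distrib, Finset.sum_add_distrib,
    hsym'] at hcontr
  -- modulo `hrad2`, `x^m R_{abcm}` is `(x·∇ + 1)(∂_b P_{ac} − ∂_a P_{bc})`
  rw [← sub_eq_zero]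
  apply eq_zero_of_sum_X_mul_pderiv_add_self_eq_zero
  simp only [map_sub, mul_sub, Finset.sum_sub_distrib, hcomm]
  linear_combination hcontr + hrad2 a c b - hrad2 b c a - congrArg (pderiv c) (hsym a b)

theorem eq_zero_of_riemann_eq_zero [CharZero K] (hsym : ∀ a b, P a b = P b a)
    (hrad : ∀ i, ∑ a, X a * P i a = 0) (hR : ∀ a b c m, riemann P a b c m = 0) (a c : Fin n) :
    P a c = 0 := by
  have h1 := congrArg (pderiv a) (hrad c)
  rw [pderiv_sum_X_mul, map_zero] at h1
  apply eq_zero_of_sum_X_mul_pderiv_add_self_eq_zero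
  rw [Finset.sum_congr rfl fun b _ => by
    rw [pderiv_comm_of_riemann_eq_zero hsym hrad hR, hsym b c]]
  linear_combination h1 + hsym a c

theorem eq_zero_of_weyl_eq_zero [CharZero K] (hn : 3 ≤ n) (hsym : ∀ a b, P a b = P b a)
    (htr : ∑ a, P a a = 0) (hP : ∀ a, P a ell = 0)
    (htang : ∀ i, i ≠ ell → ∀ x : Fin n → K, x ell = 0 →
      ∑ j ∈ Finset.univ.erase ell, x j * eval x (P i j) = 0)
    (hW : ∀ a b c m, weyl P a b c m = 0)
    (hbd : ∀ i j, i ≠ ell → j ≠ ell → ∀ x : Fin n → K, x ell = 0 →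
      eval x (pderiv ell (P i j)) = 0) (a b : Fin n) :
    P a b = 0 := by
  have hQ := doubleDiv_eq_zero hn hsym htr hP fun i => hW ell i i ell
  have hdd := pderiv_pderiv_normal_eq_zero hsym hP hQ fun i j => hW ell i j ell
  have hd := pderiv_normal_eq_zero hsym hP hdd hbd
  have hA := schouten_eq_zero hn hsym hP hd hQ fun a c => hW a ell c ell
  refine eq_zero_of_riemann_eq_zero hsym (sum_X_mul_eq_zero hsym hP hd htang) ?_ a b
  simpa only [riemann_eq_weyl hA] using hW

end AlmarazSun

section Calculus

open MvPolynomial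

variable {n : ℕ}

theorem hasFDerivAt_eval_ofLp (p : MvPolynomial (Fin n) ℝ) (x : Euc n) :
    HasFDerivAt (fun y : Euc n => eval y.ofLp p)
      (∑ i, eval x.ofLp (pderiv i p) • (EuclideanSpace.proj i : Euc n →L[ℝ] ℝ)) x := by
  classical
  induction p using MvPolynomial.induction_on with
  | C r =>
    simp only [eval_C, pderiv_C, map_zero, zero_smul, Finset.sum_const_zero]
    exact hasFDerivAt_const r x
  | add p q hp hq =>
    simp only [map_add, add_smul, Finset.sum_add_distrib]
    exact hp.add hq
  | mul_X p j hp =>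
    simp only [map_mul, eval_X]
    refine (hp.mul (EuclideanSpace.proj j : Euc n →L[ℝ] ℝ).hasFDerivAt).congr_fderiv ?_
    ext v
    simp only [PiLp.proj_apply, add_apply, smul_apply, smul_eq_mul, sum_apply, Finset.mul_sum,
      Derivation.leibniz, pderiv_X, Pi.single_apply, mul_ite, mul_one, mul_zero, map_add,
      apply_ite (eval x.ofLp), map_zero, map_mul, eval_X, add_mul, ite_mul, zero_mul,
      Finset.sum_add_distrib, Finset.sum_ite_eq, Finset.mem_univ, if_true, mul_assoc]

theorem pd_eval_ofLp (a : Fin n) (p : MvPolynomial (Fin n) ℝ) :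
    pd a (fun y : Euc n => eval y.ofLp p) = fun x => eval x.ofLp (pderiv a p) := by
  funext x
  simp [pd, (hasFDerivAt_eval_ofLp p x).fderiv, PiLp.single_apply]

end Calculus

section Transfer

open MvPolynomial AlmarazSun

variable {n d : ℕ}

def Hpoly.toMvPolynomial (h : Fin n → Fin n → (Fin n → Fin (d + 1)) → ℝ) (a b : Fin n) :
    MvPolynomial (Fin n) ℝ :=
  ∑ α ∈ idxSet n d, C (h a b α) * ∏ i, X i ^ (α i : ℕ)

theorem Hpoly_eq_eval (h : Fin n → Fin n → (Fin n → Fin (d + 1)) → ℝ) (a b : Fin n) :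
    Hpoly h a b = fun x => eval x.ofLp (Hpoly.toMvPolynomial h a b) := by
  funext x
  simp [Hpoly, Hpoly.toMvPolynomial]

theorem Atensor_eq_eval (h : Fin n → Fin n → (Fin n → Fin (d + 1)) → ℝ) (a c : Fin n)
    (x : Euc n) : Atensor h a c x = eval x.ofLp (schouten (Hpoly.toMvPolynomial h) a c) := by
  simp [Atensor, schouten, doubleDiv, Hpoly_eq_eval, pd_eval_ofLp, apply_ite (eval x.ofLp)]

theorem Ztensor_eq_eval (h : Fin n → Fin n → (Fin n → Fin (d + 1)) → ℝ) (a b c m : Fin n)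
    (x : Euc n) : Ztensor h a b c m x = eval x.ofLp (weyl (Hpoly.toMvPolynomial h) a b c m) := by
  simp [Ztensor, weyl, riemann, Atensor_eq_eval, Hpoly_eq_eval, pd_eval_ofLp,
    apply_ite (eval x.ofLp)]

end Transfer

theorem stmt0_general (n : ℕ) (hn : 4 ≤ n) (ell : Fin n)
    (h : Fin n → Fin n → (Fin n → Fin ((n - 2) / 2 + 1)) → ℝ)
    (hsym : ∀ (a b : Fin n) (x : Euc n), Hpoly h a b x = Hpoly h b a x)
    (htrace : ∀ x : Euc n, ∑ a, Hpoly h a a x = 0)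
    (hHn : ∀ (a : Fin n) (x : Euc n), 0 ≤ x ell → Hpoly h a ell x = 0)
    (htang : ∀ (i : Fin n) (x : Euc n), i ≠ ell → x ell = 0 →
      ∑ j ∈ Finset.univ.erase ell, x j * Hpoly h i j x = 0)
    (hZ : ∀ (a b c m : Fin n) (x : Euc n), 0 ≤ x ell → Ztensor h a b c m x = 0)
    (hbd : ∀ (i j : Fin n) (x : Euc n), i ≠ ell → j ≠ ell → x ell = 0 →
      pd ell (Hpoly h i j) x = 0) :
    ∀ (a b : Fin n) (x : Euc n), 0 ≤ x ell → Hpoly h a b x = 0 := by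
  have hP : ∀ a b, Hpoly.toMvPolynomial h a b = 0 := by
    refine AlmarazSun.eq_zero_of_weyl_eq_zero (ell := ell) (by omega) (fun a b => ?_) ?_
      (fun a => ?_) (fun i hi y hy => ?_) (fun a b c m => ?_) (fun i j hi hj y hy => ?_)
    · exact MvPolynomial.funext fun y => by simpa [Hpoly_eq_eval] using hsym a b (.toLp 2 y)
    · exact MvPolynomial.funext fun y => by simpa [Hpoly_eq_eval] using htrace (.toLp 2 y)
    · refine MvPolynomial.eq_zero_of_eval_eq_zero_of_apply_mem (i := ell) (Set.Ici_infinite 0)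
        fun y hy => ?_
      simpa [Hpoly_eq_eval] using hHn a (.toLp 2 y) hy
    · simpa [Hpoly_eq_eval] using htang i (.toLp 2 y) hi hy
    · refine MvPolynomial.eq_zero_of_eval_eq_zero_of_apply_mem (i := ell) (Set.Ici_infinite 0)
        fun y hy => ?_
      simpa [Ztensor_eq_eval] using hZ a b c m (.toLp 2 y) hy
    · simpa [Hpoly_eq_eval, pd_eval_ofLp] using hbd i j (.toLp 2 y) hi hj hy
  intro a b x _
  simp [Hpoly_eq_eval, hP]

/-- Lemma 1 of Almaraz–Sun: if the algebraic Weyl tensor of `H` vanishes on `ℝⁿ₊` and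
`∂ₙ H_{ij} = 0` on `∂ℝⁿ₊`, then `H ≡ 0` on `ℝⁿ₊`.
Here `n ≥ 4`, `d = ⌊(n−2)/2⌋`, and `ell` is the last index (the `n`-th coordinate). -/
theorem stmt0 (n : ℕ) (hn : 4 ≤ n) (ell : Fin n) (hell : (ell : ℕ) = n - 1)
    (h : Fin n → Fin n → (Fin n → Fin ((n - 2) / 2 + 1)) → ℝ)
    (hsym : ∀ (a b : Fin n) (x : Euc n), Hpoly h a b x = Hpoly h b a x)
    (htrace : ∀ x : Euc n, ∑ a, Hpoly h a a x = 0)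
    (hHn : ∀ (a : Fin n) (x : Euc n), 0 ≤ x ell → Hpoly h a ell x = 0)
    (hpd0 : ∀ i j k : Fin n, i ≠ ell → j ≠ ell → k ≠ ell → pd k (Hpoly h i j) 0 = 0)
    (htang : ∀ (i : Fin n) (x : Euc n), i ≠ ell → x ell = 0 →
      ∑ j ∈ Finset.univ.erase ell, x j * Hpoly h i j x = 0)
    (hZ : ∀ (a b c m : Fin n) (x : Euc n), 0 ≤ x ell → Ztensor h a b c m x = 0)
    (hbd : ∀ (i j : Fin n) (x : Euc n), i ≠ ell → j ≠ ell → x ell = 0 →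
      pd ell (Hpoly h i j) x = 0) :
    ∀ (a b : Fin n) (x : Euc n), 0 ≤ x ell → Hpoly h a b x = 0 :=
  stmt0_general n hn ell h hsym htrace hHn htang hZ hbd
end
end

section
/- Let n ≥ 3 be an integer and set α(n) = ∫_{ℝ^{n−1}} (1 + |ȳ|²)^{1−n} dȳ (a finite positive number). There exists a constant C > 0, depending only on n, such that for all real numbers ε, δ, ρ with 0 < ε < δ ≤ ρ: δ ∫_{{x̄ ∈ ℝ^{n−1} : |x̄| ≤ ρ/2}} (ε² + |x̄|² + δ²)^{1−n} dx̄ ≥ 2^{1−n} δ^{2−n} ( α(n) − C (δ/ρ)^{n−1} ). (Key lower bound established in the proof of Lemma 3.12 of Almaraz–Sun.) -/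
/-!
As `ε < δ`, the integrand is at least `2^{1-n} (δ² + |x̄|²)^{1-n}`. The substitution `x̄ = δ ȳ`
turns the integral of the latter over `|x̄| ≤ ρ/2` into `δ^{1-n}` times the integral of
`(1 + |ȳ|²)^{1-n}` over `|ȳ| ≤ R := ρ/(2δ)`, and in polar coordinates the missing tail is
`∫_{|ȳ|>R} (1 + |ȳ|²)^{1-n} ≤ ∫_{|ȳ|>R} |ȳ|^{2-2n} = |B₁| R^{1-n} = |B₁| 2^{n-1} (δ/ρ)^{n-1}`.
-/

open MeasureTheory Metric Set Module Pointwise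

theorem pow_mul_one_add_sq_rpow_le {r p : ℝ} (hr : 0 < r) (hp : p ≤ 0) (k : ℕ) :
    r ^ k * (1 + r ^ 2) ^ p ≤ r ^ ((k : ℝ) + 2 * p) := by
  calc r ^ k * (1 + r ^ 2) ^ p ≤ r ^ k * (r ^ 2) ^ p := by
        refine mul_le_mul_of_nonneg_left ?_ (by positivity)
        exact Real.rpow_le_rpow_of_nonpos (by positivity) (le_add_of_nonneg_left zero_le_one) hp
    _ = r ^ ((k : ℝ) + 2 * p) := by
        rw [Real.rpow_add hr, Real.rpow_natCast, Real.rpow_mul hr.le, Real.rpow_two]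

theorem setIntegral_Ioi_pow_mul_one_add_sq_rpow_le {p R : ℝ} {k : ℕ} (hkp : (k : ℝ) + 2 * p < -1)
    (hR : 0 < R) :
    ∫ r in Ioi R, r ^ k * (1 + r ^ 2) ^ p ≤ -R ^ ((k : ℝ) + 2 * p + 1) / ((k : ℝ) + 2 * p + 1) := by
  have hp : p ≤ 0 := by have : (0 : ℝ) ≤ k := k.cast_nonneg; linarith
  rw [← integral_Ioi_rpow_of_lt hkp hR]
  refine integral_mono_of_nonneg ?_ (integrableOn_Ioi_rpow_of_lt hkp hR) ?_
  · filter_upwards [ae_restrict_mem measurableSet_Ioi] with r (hr : R < r)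
    have := hR.trans hr
    positivity
  · filter_upwards [ae_restrict_mem measurableSet_Ioi] with r (hr : R < r)
    exact pow_mul_one_add_sq_rpow_le (hR.trans hr) hp k

theorem two_rpow_mul_sq_add_rpow_le {ε δ t p : ℝ} (hεδ : ε ^ 2 ≤ δ ^ 2) (hδ : 0 < δ) (ht : 0 ≤ t)
    (hp : p ≤ 0) : 2 ^ p * (δ ^ 2 + t) ^ p ≤ (ε ^ 2 + t + δ ^ 2) ^ p := by
  rw [← Real.mul_rpow zero_le_two (by positivity)]
  exact Real.rpow_le_rpow_of_nonpos (by positivity) (by linarith) hp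

theorem two_rpow_mul_setIntegral_le {E : Type*} [NormedAddCommGroup E] [MeasurableSpace E]
    [OpensMeasurableSpace E] {μ : Measure E} [IsFiniteMeasureOnCompacts μ] {s : Set E}
    (hs : IsCompact s) {ε δ p : ℝ} (hεδ : ε ^ 2 ≤ δ ^ 2) (hδ : 0 < δ) (hp : p ≤ 0) :
    2 ^ p * ∫ x in s, (δ ^ 2 + ‖x‖ ^ 2) ^ p ∂μ ≤ ∫ x in s, (ε ^ 2 + ‖x‖ ^ 2 + δ ^ 2) ^ p ∂μ := by
  have hcont₁ : Continuous fun x : E ↦ 2 ^ p * (δ ^ 2 + ‖x‖ ^ 2) ^ p :=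
    continuous_const.mul <| (by fun_prop : Continuous fun x : E ↦ δ ^ 2 + ‖x‖ ^ 2).rpow_const
      fun x ↦ .inl (by positivity)
  have hcont₂ : Continuous fun x : E ↦ (ε ^ 2 + ‖x‖ ^ 2 + δ ^ 2) ^ p :=
    (by fun_prop : Continuous fun x : E ↦ ε ^ 2 + ‖x‖ ^ 2 + δ ^ 2).rpow_const
      fun x ↦ .inl (by positivity)
  rw [← integral_const_mul]
  exact setIntegral_mono_on (hcont₁.continuousOn.integrableOn_compact hs)
    (hcont₂.continuousOn.integrableOn_compact hs) hs.measurableSet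
    fun x _ ↦ two_rpow_mul_sq_add_rpow_le hεδ hδ (by positivity) hp

section

variable {E : Type*} [NormedAddCommGroup E] [NormedSpace ℝ E] [FiniteDimensional ℝ E]
  [MeasurableSpace E] [BorelSpace E] (μ : Measure E) [μ.IsAddHaarMeasure]

theorem setIntegral_compl_closedBall_fun_norm [Nontrivial E] {F : Type*} [NormedAddCommGroup F]
    [NormedSpace ℝ F] (f : ℝ → F) {R : ℝ} (hR : 0 ≤ R) :
    ∫ x in (closedBall (0 : E) R)ᶜ, f ‖x‖ ∂μ =
      finrank ℝ E • μ.real (ball 0 1) • ∫ r in Ioi R, r ^ (finrank ℝ E - 1) • f r := by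
  have hind : ∀ x : E, (closedBall (0 : E) R)ᶜ.indicator (fun x ↦ f ‖x‖) x
      = (Ioi R).indicator f ‖x‖ := by
    intro x
    simp only [indicator, mem_compl_iff, mem_closedBall_zero_iff, mem_Ioi, not_le]
  rw [← integral_indicator measurableSet_closedBall.compl, funext hind,
    integral_fun_norm_addHaar μ, ← integral_indicator measurableSet_Ioi,
    ← integral_indicator measurableSet_Ioi]
  congr 3
  ext r
  by_cases hr : R < r
  · simp [indicator, hr, hR.trans_lt hr]
  · simp [indicator, hr]

theorem setIntegral_compl_closedBall_one_add_norm_sq_rpow_le [Nontrivial E] {p R : ℝ}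
    (hp : (finrank ℝ E : ℝ) + 2 * p < 0) (hR : 0 < R) :
    ∫ x in (closedBall (0 : E) R)ᶜ, (1 + ‖x‖ ^ 2) ^ p ∂μ ≤
      finrank ℝ E * μ.real (ball 0 1) * (-R ^ ((finrank ℝ E : ℝ) + 2 * p) /
        ((finrank ℝ E : ℝ) + 2 * p)) := by
  have hk : ((finrank ℝ E - 1 : ℕ) : ℝ) + 2 * p + 1 = (finrank ℝ E : ℝ) + 2 * p := by
    rw [Nat.cast_pred finrank_pos]; ring
  rw [setIntegral_compl_closedBall_fun_norm μ (fun r ↦ (1 + r ^ 2) ^ p) hR.le, nsmul_eq_mul,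
    smul_eq_mul, mul_assoc, ← hk]
  gcongr
  exact setIntegral_Ioi_pow_mul_one_add_sq_rpow_le (by linarith) hR

theorem integral_sub_le_setIntegral_closedBall_one_add_norm_sq_rpow [Nontrivial E] {p R : ℝ}
    (hp : (finrank ℝ E : ℝ) + 2 * p < 0) (hR : 0 < R) :
    ∫ x, (1 + ‖x‖ ^ 2) ^ p ∂μ - finrank ℝ E * μ.real (ball 0 1) *
        (-R ^ ((finrank ℝ E : ℝ) + 2 * p) / ((finrank ℝ E : ℝ) + 2 * p)) ≤
      ∫ x in closedBall (0 : E) R, (1 + ‖x‖ ^ 2) ^ p ∂μ := by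
  have hint : Integrable (fun x : E ↦ (1 + ‖x‖ ^ 2) ^ p) μ := by
    simpa using integrable_rpow_neg_one_add_norm_sq (μ := μ) (r := -2 * p) (by linarith)
  rw [← integral_add_compl measurableSet_closedBall hint, sub_le_iff_le_add]
  exact add_le_add_right (setIntegral_compl_closedBall_one_add_norm_sq_rpow_le μ hp hR) _

theorem setIntegral_closedBall_sq_add_norm_sq_rpow {δ : ℝ} (hδ : 0 < δ) (p R : ℝ) :
    ∫ x in closedBall (0 : E) (δ * R), (δ ^ 2 + ‖x‖ ^ 2) ^ p ∂μ =
      δ ^ ((finrank ℝ E : ℝ) + 2 * p) * ∫ y in closedBall (0 : E) R, (1 + ‖y‖ ^ 2) ^ p ∂μ := by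
  have hscale : ∀ y : E, (δ ^ 2 + ‖δ • y‖ ^ 2) ^ p = δ ^ (2 * p) * (1 + ‖y‖ ^ 2) ^ p := by
    intro y
    rw [norm_smul, Real.norm_of_nonneg hδ.le, mul_pow, ← mul_one_add,
      Real.mul_rpow (by positivity) (by positivity), ← Real.rpow_two, ← Real.rpow_mul hδ.le]
  have hball : δ • closedBall (0 : E) R = closedBall 0 (δ * R) := by
    rw [smul_closedBall' hδ.ne', smul_zero, Real.norm_of_nonneg hδ.le]
  have := Measure.setIntegral_comp_smul_of_pos μ (fun x : E ↦ (δ ^ 2 + ‖x‖ ^ 2) ^ p)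
    (closedBall 0 R) hδ
  rw [hball, funext hscale, integral_const_mul, smul_eq_mul, eq_inv_mul_iff_mul_eq₀ (by positivity)]
    at this
  rw [← this, ← mul_assoc, Real.rpow_add hδ, Real.rpow_natCast]

theorem le_mul_setIntegral_closedBall_rpow_neg_finrank [Nontrivial E] {ε δ ρ : ℝ}
    (hεδ : ε ^ 2 ≤ δ ^ 2) (hδ : 0 < δ) (hρ : 0 < ρ) :
    2 ^ (-(finrank ℝ E : ℝ)) * δ ^ (1 - (finrank ℝ E : ℝ)) *
        (∫ y, (1 + ‖y‖ ^ 2) ^ (-(finrank ℝ E : ℝ)) ∂μ -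
          μ.real (ball 0 1) * 2 ^ (finrank ℝ E : ℝ) * (δ / ρ) ^ (finrank ℝ E : ℝ)) ≤
      δ * ∫ x in closedBall (0 : E) (ρ / 2), (ε ^ 2 + ‖x‖ ^ 2 + δ ^ 2) ^ (-(finrank ℝ E : ℝ)) ∂μ := by
  have hd_pos : (0 : ℝ) < finrank ℝ E := mod_cast finrank_pos
  have hR : 0 < ρ / (2 * δ) := by positivity
  have hlow := integral_sub_le_setIntegral_closedBall_one_add_norm_sq_rpow μ
    (p := -(finrank ℝ E : ℝ)) (by linarith) hR
  have hscale := setIntegral_closedBall_sq_add_norm_sq_rpow μ hδ (-(finrank ℝ E : ℝ)) (ρ / (2 * δ))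
  set d : ℝ := (finrank ℝ E : ℝ)
  have htail : d * μ.real (ball 0 1) * (-(ρ / (2 * δ)) ^ (d + 2 * -d) / (d + 2 * -d)) =
      μ.real (ball 0 1) * 2 ^ d * (δ / ρ) ^ d := by
    rw [show d + 2 * -d = -d by ring, Real.rpow_neg hR.le, ← Real.inv_rpow hR.le, inv_div,
      mul_div_assoc, Real.mul_rpow zero_le_two (by positivity)]
    field_simp
  rw [htail] at hlow
  rw [show δ * (ρ / (2 * δ)) = ρ / 2 by field_simp] at hscale
  calc _ ≤ 2 ^ (-d) * δ ^ (1 - d) * ∫ y in closedBall (0 : E) (ρ / (2 * δ)),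
          (1 + ‖y‖ ^ 2) ^ (-d) ∂μ := by gcongr
    _ = δ * (2 ^ (-d) * ∫ x in closedBall (0 : E) (ρ / 2), (δ ^ 2 + ‖x‖ ^ 2) ^ (-d) ∂μ) := by
      rw [hscale, show 1 - d = 1 + (d + 2 * -d) by ring, Real.rpow_add hδ, Real.rpow_one]
      ring
    _ ≤ _ := by
      gcongr
      exact two_rpow_mul_setIntegral_le (isCompact_closedBall _ _) hεδ hδ (by linarith)

end

/-- Key lower bound from the proof of Lemma 3.12 of Almaraz–Sun: with
`α(n) = ∫_{ℝ^{n−1}} (1+|ȳ|²)^{1−n} dȳ`, there is `C = C(n) > 0` such that for all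
`0 < ε < δ ≤ ρ`,
`δ ∫_{|x̄| ≤ ρ/2} (ε² + |x̄|² + δ²)^{1−n} dx̄ ≥ 2^{1−n} δ^{2−n} (α(n) − C (δ/ρ)^{n−1})`. -/
theorem stmt11 (n : ℕ) (hn : 3 ≤ n) :
    ∃ C : ℝ, 0 < C ∧ ∀ ε δ ρ : ℝ, 0 < ε → ε < δ → δ ≤ ρ →
      (2 : ℝ) ^ ((1 : ℝ) - (n : ℝ)) * δ ^ ((2 : ℝ) - (n : ℝ)) *
          ((∫ y : EuclideanSpace ℝ (Fin (n - 1)), (1 + ‖y‖ ^ 2) ^ ((1 : ℝ) - (n : ℝ)))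
            - C * (δ / ρ) ^ ((n : ℝ) - 1))
        ≤ δ * ∫ x in Metric.closedBall (0 : EuclideanSpace ℝ (Fin (n - 1))) (ρ / 2),
            (ε ^ 2 + ‖x‖ ^ 2 + δ ^ 2) ^ ((1 : ℝ) - (n : ℝ)) := by
  have : Nontrivial (EuclideanSpace ℝ (Fin (n - 1))) :=
    have : Nonempty (Fin (n - 1)) := ⟨⟨0, by omega⟩⟩
    inferInstance
  have hd : (finrank ℝ (EuclideanSpace ℝ (Fin (n - 1))) : ℝ) = n - 1 := by
    rw [finrank_euclideanSpace_fin, Nat.cast_pred (by omega)]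
  have hV : 0 < volume.real (ball (0 : EuclideanSpace ℝ (Fin (n - 1))) 1) :=
    ENNReal.toReal_pos (measure_ball_pos _ _ one_pos).ne' measure_ball_lt_top.ne
  refine ⟨_, mul_pos hV (Real.rpow_pos_of_pos two_pos ((n : ℝ) - 1)),
    fun ε δ ρ hε hεδ hδρ ↦ ?_⟩
  have hδ : 0 < δ := hε.trans hεδ
  have key := le_mul_setIntegral_closedBall_rpow_neg_finrank
    (volume : Measure (EuclideanSpace ℝ (Fin (n - 1))))
    (pow_le_pow_left₀ hε.le hεδ.le 2) hδ (hδ.trans_le hδρ)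
  rw [hd] at key
  rwa [show (1 : ℝ) - n = -(n - 1) by ring, show (2 : ℝ) - n = 1 - (n - 1) by ring]
end

section
/- Let n ≥ 3 be an integer. There exists a constant C > 0, depending only on n, such that for all x₁, x₂ ∈ ℝⁿ and all ε₁, ε₂, ρ > 0: ∫_{{y ∈ ℝⁿ : |y−x₂| ≤ 4ρ}} (ε₁/(ε₁²+|y−x₁|²))^{(n−2)/2} (ε₂/(ε₂²+|y−x₂|²))^{(n−2)/2} (ε₂²+|y−x₂|²)^{−1/2} dy ≤ C ρ ( ε₁ε₂/(ε₂² + |x₁−x₂|²) )^{(n−2)/2}. (Euclidean form of the interaction estimate proved in Corollary 3.21 of Almaraz–Sun, by splitting the domain according to whether 2|y−x₁| ≤ ε₂ + |x₁−x₂| or not.) -/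
/-!
Split the ball `|y - x₂| ≤ 4ρ` according to whether `2|y - x₁| ≤ ε₂ + |x₁ - x₂|`. Near `x₁` the
integrand is at most a constant times `(ε₁ε₂/(ε₂² + |x₁ - x₂|²))^{(n-2)/2} |y - x₁|^{1-n}`, far
from it the same holds with `|y - x₂|^{1-n}`. Both bounds are elementary inequalities between the
bubbles. The domain of each piece lies in an annulus of width at most `8ρ` around the singularity
(by the triangle inequality), and in polar coordinates `|y - c|^{1-n}` integrates over an annulus
`a ≤ |y - c| ≤ b` to `n |B₁| (b - a)`.
-/

open MeasureTheory Metric Set Module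

lemma rpow_neg_half_le_inv {X t : ℝ} (ht : 0 < t) (h : t ^ 2 ≤ X) :
    X ^ (-(1 : ℝ) / 2) ≤ t⁻¹ :=
  calc X ^ (-(1 : ℝ) / 2) ≤ (t ^ 2) ^ (-(1 : ℝ) / 2) :=
        Real.rpow_le_rpow_of_nonpos (by positivity) h (by norm_num)
    _ = t⁻¹ := by
        rw [← Real.rpow_natCast, ← Real.rpow_mul ht.le]
        norm_num [Real.rpow_neg_one]

lemma div_sq_rpow_mul_rpow_mul_inv {x y r p : ℝ} (hx : 0 ≤ x) (hy : 0 ≤ y) (hr : 0 < r) :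
    (x / r ^ 2) ^ p * y ^ p * r⁻¹ = (x * y) ^ p * r ^ (-(2 * p + 1)) := by
  rw [Real.div_rpow hx (by positivity), Real.mul_rpow hx hy, ← Real.rpow_natCast,
    ← Real.rpow_mul hr.le, Real.rpow_neg hr.le, Real.rpow_add hr, Real.rpow_one]
  push_cast
  field_simp

lemma interaction_integrand_le_of_near {p ε₁ ε₂ s r₁ r₂ : ℝ} (hp : 0 ≤ p) (hε₁ : 0 < ε₁)
    (hε₂ : 0 < ε₂) (hs : 0 ≤ s) (hr₁ : 0 < r₁) (htri : s ≤ r₁ + r₂) (hnear : 2 * r₁ ≤ ε₂ + s) :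
    (ε₁ / (ε₁ ^ 2 + r₁ ^ 2)) ^ p *
        ((ε₂ / (ε₂ ^ 2 + r₂ ^ 2)) ^ p * (ε₂ ^ 2 + r₂ ^ 2) ^ (-(1 : ℝ) / 2)) ≤
      2 * 8 ^ p * (ε₁ * ε₂ / (ε₂ ^ 2 + s ^ 2)) ^ p * r₁ ^ (-(2 * p + 1)) := by
  have hs' : s ≤ ε₂ + 2 * r₂ := by linarith
  have hD : ε₂ ^ 2 + s ^ 2 ≤ 8 * (ε₂ ^ 2 + r₂ ^ 2) := by
    nlinarith [mul_self_le_mul_self hs hs', sq_nonneg (ε₂ - 2 * r₂)]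
  have h₁ : ε₁ / (ε₁ ^ 2 + r₁ ^ 2) ≤ ε₁ / r₁ ^ 2 := by
    gcongr
    exact le_add_of_nonneg_left (by positivity)
  have h₂ : ε₂ / (ε₂ ^ 2 + r₂ ^ 2) ≤ 8 * ε₂ / (ε₂ ^ 2 + s ^ 2) := by
    rw [div_le_div_iff₀ (by positivity) (by positivity)]
    nlinarith
  have h₃ : (ε₂ ^ 2 + r₂ ^ 2) ^ (-(1 : ℝ) / 2) ≤ (r₁ / 2)⁻¹ :=
    rpow_neg_half_le_inv (by positivity)
      (by nlinarith [mul_self_le_mul_self (by positivity) hnear, sq_nonneg (ε₂ - s)])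
  calc _ ≤ (ε₁ / r₁ ^ 2) ^ p * ((8 * ε₂ / (ε₂ ^ 2 + s ^ 2)) ^ p * (r₁ / 2)⁻¹) := by
        gcongr
    _ = 2 * ((ε₁ / r₁ ^ 2) ^ p * (8 * ε₂ / (ε₂ ^ 2 + s ^ 2)) ^ p * r₁⁻¹) := by ring
    _ = 2 * ((8 * (ε₁ * ε₂ / (ε₂ ^ 2 + s ^ 2))) ^ p * r₁ ^ (-(2 * p + 1))) := by
        rw [div_sq_rpow_mul_rpow_mul_inv hε₁.le (by positivity) hr₁]
        ring_nf
    _ = _ := by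
        rw [Real.mul_rpow (by norm_num) (by positivity)]
        ring

lemma interaction_integrand_le_of_far {p ε₁ ε₂ s r₁ r₂ : ℝ} (hp : 0 ≤ p) (hε₁ : 0 < ε₁)
    (hε₂ : 0 < ε₂) (hs : 0 ≤ s) (hr₂ : 0 < r₂) (hfar : ε₂ + s < 2 * r₁) :
    (ε₁ / (ε₁ ^ 2 + r₁ ^ 2)) ^ p *
        ((ε₂ / (ε₂ ^ 2 + r₂ ^ 2)) ^ p * (ε₂ ^ 2 + r₂ ^ 2) ^ (-(1 : ℝ) / 2)) ≤
      4 ^ p * (ε₁ * ε₂ / (ε₂ ^ 2 + s ^ 2)) ^ p * r₂ ^ (-(2 * p + 1)) := by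
  have hD : ε₂ ^ 2 + s ^ 2 ≤ 4 * (ε₁ ^ 2 + r₁ ^ 2) := by
    nlinarith [mul_self_le_mul_self (by positivity) hfar.le, mul_nonneg hε₂.le hs]
  have h₁ : ε₁ / (ε₁ ^ 2 + r₁ ^ 2) ≤ 4 * ε₁ / (ε₂ ^ 2 + s ^ 2) := by
    rw [div_le_div_iff₀ (by positivity) (by positivity)]
    nlinarith [mul_le_mul_of_nonneg_left hD hε₁.le]
  have h₂ : ε₂ / (ε₂ ^ 2 + r₂ ^ 2) ≤ ε₂ / r₂ ^ 2 := by
    gcongr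
    exact le_add_of_nonneg_left (by positivity)
  have h₃ : (ε₂ ^ 2 + r₂ ^ 2) ^ (-(1 : ℝ) / 2) ≤ r₂⁻¹ :=
    rpow_neg_half_le_inv hr₂ (le_add_of_nonneg_left (by positivity))
  calc _ ≤ (4 * ε₁ / (ε₂ ^ 2 + s ^ 2)) ^ p * ((ε₂ / r₂ ^ 2) ^ p * r₂⁻¹) := by
        gcongr
    _ = (ε₂ / r₂ ^ 2) ^ p * (4 * ε₁ / (ε₂ ^ 2 + s ^ 2)) ^ p * r₂⁻¹ := by ring
    _ = (4 * (ε₁ * ε₂ / (ε₂ ^ 2 + s ^ 2))) ^ p * r₂ ^ (-(2 * p + 1)) := by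
        rw [div_sq_rpow_mul_rpow_mul_inv hε₂.le (by positivity) hr₂]
        ring_nf
    _ = _ := by
        rw [Real.mul_rpow (by norm_num) (by positivity)]

section HaarMeasure

variable {E : Type*} [NormedAddCommGroup E] [NormedSpace ℝ E] [FiniteDimensional ℝ E]
  [MeasurableSpace E] [BorelSpace E] [Nontrivial E] (μ : Measure E) [μ.IsAddHaarMeasure]

omit [MeasurableSpace E] [BorelSpace E] in
lemma pow_finrank_sub_one_mul_rpow_one_sub_finrank {r : ℝ} (hr : 0 < r) :
    r ^ (finrank ℝ E - 1) * r ^ (1 - finrank ℝ E : ℝ) = 1 := by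
  rw [← Real.rpow_natCast, Nat.cast_pred finrank_pos, ← Real.rpow_add hr]
  simp

lemma lintegral_annulus_norm_sub_rpow_le (c : E) {a b : ℝ} (hab : a ≤ b) :
    ∫⁻ y in {y | ‖y - c‖ ∈ Icc a b}, ENNReal.ofReal (‖y - c‖ ^ (1 - finrank ℝ E : ℝ)) ∂μ ≤
      ENNReal.ofReal (finrank ℝ E * μ.real (ball 0 1) * (b - a)) := by
  set g : ℝ → ℝ := (Icc a b).indicator fun r ↦ r ^ (1 - finrank ℝ E : ℝ)
  have hg_polar : EqOn (fun r ↦ r ^ (finrank ℝ E - 1) • g r) ((Icc a b).indicator 1) (Ioi 0) := by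
    intro r hr
    by_cases h : r ∈ Icc a b
    · simp [g, h, pow_finrank_sub_one_mul_rpow_one_sub_finrank (mem_Ioi.mp hr)]
    · simp [g, h]
  have hg_int : Integrable (fun y : E ↦ g ‖y‖) μ := by
    rw [integrable_fun_norm_addHaar, integrableOn_congr_fun hg_polar measurableSet_Ioi]
    exact ((integrable_indicator_iff measurableSet_Icc).2
      (integrableOn_const measure_Icc_lt_top.ne)).integrableOn
  have hg_nonneg (y : E) : 0 ≤ g ‖y‖ := by
    by_cases h : ‖y‖ ∈ Icc a b
    · simp only [g, indicator_of_mem h]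
      positivity
    · simp [g, h]
  calc ∫⁻ y in {y | ‖y - c‖ ∈ Icc a b}, ENNReal.ofReal (‖y - c‖ ^ (1 - finrank ℝ E : ℝ)) ∂μ
      = ∫⁻ y, ENNReal.ofReal (g ‖y - c‖) ∂μ := by
        have hS : MeasurableSet {y : E | ‖y - c‖ ∈ Icc a b} :=
          measurableSet_Icc.preimage (by fun_prop)
        rw [← lintegral_indicator hS]
        congr 1 with y
        by_cases h : ‖y - c‖ ∈ Icc a b <;>
          simp only [g, indicator, mem_ofPred_eq, h, if_true, if_false, ENNReal.ofReal_zero]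
    _ = ENNReal.ofReal (∫ y, g ‖y‖ ∂μ) := by
        rw [lintegral_sub_right_eq_self (fun y ↦ ENNReal.ofReal (g ‖y‖)),
          ofReal_integral_eq_lintegral_ofReal hg_int (.of_forall hg_nonneg)]
    _ ≤ _ := by
        rw [integral_fun_norm_addHaar, setIntegral_congr_fun measurableSet_Ioi hg_polar,
          setIntegral_indicator measurableSet_Icc]
        gcongr
        simp only [nsmul_eq_mul, smul_eq_mul, Pi.one_apply, integral_const, mul_one,
          measureReal_restrict_apply_univ, mul_assoc]
        gcongr
        exact (measureReal_mono inter_subset_right measure_Icc_lt_top.ne).trans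
          (Real.volume_real_Icc_of_le hab).le

lemma setLIntegral_le_of_le_mul_norm_sub_rpow {f : E → ℝ} {S : Set E} {c : E} {K a b : ℝ}
    (hK : 0 ≤ K) (hab : a ≤ b) (hS : ∀ y ∈ S, ‖y - c‖ ∈ Icc a b)
    (hf : ∀ y ∈ S, y ≠ c → f y ≤ K * ‖y - c‖ ^ (1 - finrank ℝ E : ℝ)) :
    ∫⁻ y in S, ENNReal.ofReal (f y) ∂μ ≤
      ENNReal.ofReal (K * (finrank ℝ E * μ.real (ball 0 1) * (b - a))) :=
  calc ∫⁻ y in S, ENNReal.ofReal (f y) ∂μ = ∫⁻ y in S \ {c}, ENNReal.ofReal (f y) ∂μ :=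
        setLIntegral_congr (sdiff_null_ae_eq_self (measure_singleton c)).symm
    _ ≤ ∫⁻ y in S \ {c}, ENNReal.ofReal K * ENNReal.ofReal (‖y - c‖ ^ (1 - finrank ℝ E : ℝ)) ∂μ :=
        setLIntegral_mono (by fun_prop) fun y hy ↦ by
          rw [← ENNReal.ofReal_mul hK]
          exact ENNReal.ofReal_le_ofReal (hf y hy.1 hy.2)
    _ ≤ ∫⁻ y in {y | ‖y - c‖ ∈ Icc a b},
          ENNReal.ofReal K * ENNReal.ofReal (‖y - c‖ ^ (1 - finrank ℝ E : ℝ)) ∂μ :=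
        lintegral_mono_set fun y hy ↦ hS y hy.1
    _ = ENNReal.ofReal K * ∫⁻ y in {y | ‖y - c‖ ∈ Icc a b},
          ENNReal.ofReal (‖y - c‖ ^ (1 - finrank ℝ E : ℝ)) ∂μ :=
        lintegral_const_mul' _ _ ENNReal.ofReal_ne_top
    _ ≤ ENNReal.ofReal K * ENNReal.ofReal (finrank ℝ E * μ.real (ball 0 1) * (b - a)) := by
        gcongr
        exact lintegral_annulus_norm_sub_rpow_le μ c hab
    _ = _ := (ENNReal.ofReal_mul hK).symm

theorem lintegral_closedBall_interaction_le {p : ℝ} (hp : 0 ≤ p)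
    (hdim : (finrank ℝ E : ℝ) = 2 * p + 2) (x₁ x₂ : E) {ε₁ ε₂ ρ : ℝ} (hε₁ : 0 < ε₁)
    (hε₂ : 0 < ε₂) (hρ : 0 ≤ ρ) :
    ∫⁻ y in closedBall x₂ (4 * ρ), ENNReal.ofReal ((ε₁ / (ε₁ ^ 2 + ‖y - x₁‖ ^ 2)) ^ p *
        ((ε₂ / (ε₂ ^ 2 + ‖y - x₂‖ ^ 2)) ^ p * (ε₂ ^ 2 + ‖y - x₂‖ ^ 2) ^ (-(1 : ℝ) / 2))) ∂μ ≤
      ENNReal.ofReal ((16 * 8 ^ p + 4 * 4 ^ p) * (finrank ℝ E * μ.real (ball 0 1)) * ρ *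
        (ε₁ * ε₂ / (ε₂ ^ 2 + ‖x₁ - x₂‖ ^ 2)) ^ p) := by
  set s := ‖x₁ - x₂‖
  set T := (ε₁ * ε₂ / (ε₂ ^ 2 + s ^ 2)) ^ p
  set F : E → ℝ := fun y ↦ (ε₁ / (ε₁ ^ 2 + ‖y - x₁‖ ^ 2)) ^ p *
    ((ε₂ / (ε₂ ^ 2 + ‖y - x₂‖ ^ 2)) ^ p * (ε₂ ^ 2 + ‖y - x₂‖ ^ 2) ^ (-(1 : ℝ) / 2))
  set near := {y : E | 2 * ‖y - x₁‖ ≤ ε₂ + s}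
  have hexp : -(2 * p + 1) = 1 - (finrank ℝ E : ℝ) := by rw [hdim]; ring
  have hT : 0 ≤ T := by positivity
  have hB : 0 ≤ finrank ℝ E * μ.real (ball 0 1) := by positivity
  have hx₁ (y : E) : s ≤ ‖y - x₁‖ + ‖y - x₂‖ := by
    simpa only [norm_sub_rev x₁ y] using norm_sub_le_norm_sub_add_norm_sub x₁ y x₂
  have hx₂ (y : E) : ‖y - x₁‖ ≤ ‖y - x₂‖ + s := by
    simpa only [norm_sub_rev x₂ x₁] using norm_sub_le_norm_sub_add_norm_sub y x₂ x₁
  have h_near : ∫⁻ y in closedBall x₂ (4 * ρ) ∩ near, ENNReal.ofReal (F y) ∂μ ≤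
      ENNReal.ofReal (2 * 8 ^ p * T * (finrank ℝ E * μ.real (ball 0 1) *
        (s + 4 * ρ - (s - 4 * ρ)))) := by
    refine setLIntegral_le_of_le_mul_norm_sub_rpow μ (c := x₁) (by positivity) (by linarith)
      (fun y hy ↦ ?_) fun y hy hy₁ ↦ ?_
    · have := mem_closedBall_iff_norm.1 hy.1
      constructor <;> linarith [hx₁ y, hx₂ y]
    · rw [← hexp]
      exact interaction_integrand_le_of_near hp hε₁ hε₂ (norm_nonneg _)
        (norm_pos_iff.2 (sub_ne_zero.2 hy₁)) (hx₁ y) hy.2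
  have h_far : ∫⁻ y in closedBall x₂ (4 * ρ) \ near, ENNReal.ofReal (F y) ∂μ ≤
      ENNReal.ofReal (4 ^ p * T * (finrank ℝ E * μ.real (ball 0 1) * (4 * ρ - 0))) := by
    refine setLIntegral_le_of_le_mul_norm_sub_rpow μ (c := x₂) (by positivity) (by linarith)
      (fun y hy ↦ ⟨norm_nonneg _, mem_closedBall_iff_norm.1 hy.1⟩) fun y hy hy₂ ↦ ?_
    rw [← hexp]
    exact interaction_integrand_le_of_far hp hε₁ hε₂ (norm_nonneg _)
      (norm_pos_iff.2 (sub_ne_zero.2 hy₂)) (not_le.1 hy.2)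
  calc _ = (∫⁻ y in closedBall x₂ (4 * ρ) ∩ near, ENNReal.ofReal (F y) ∂μ) +
        ∫⁻ y in closedBall x₂ (4 * ρ) \ near, ENNReal.ofReal (F y) ∂μ :=
        (lintegral_inter_add_sdiff _ _ (measurableSet_le (by fun_prop) (by fun_prop))).symm
    _ ≤ _ := add_le_add h_near h_far
    _ = _ := by
      rw [← ENNReal.ofReal_add (mul_nonneg (by positivity) (mul_nonneg hB (by linarith)))
        (mul_nonneg (by positivity) (mul_nonneg hB (by linarith)))]
      ring_nf

end HaarMeasure

/-- Interaction estimate (Euclidean form of Corollary 3.21 of Almaraz–Sun): for `n ≥ 3`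
there is `C = C(n) > 0` such that for all `x₁, x₂ ∈ ℝⁿ` and `ε₁, ε₂, ρ > 0`,
`∫_{|y−x₂| ≤ 4ρ} (ε₁/(ε₁²+|y−x₁|²))^{(n−2)/2} (ε₂/(ε₂²+|y−x₂|²))^{(n−2)/2}
  (ε₂²+|y−x₂|²)^{−1/2} dy ≤ C ρ (ε₁ε₂/(ε₂² + |x₁−x₂|²))^{(n−2)/2}`. -/
theorem stmt12 (n : ℕ) (hn : 3 ≤ n) :
    ∃ C : ℝ, 0 < C ∧ ∀ (x₁ x₂ : EuclideanSpace ℝ (Fin n)) (ε₁ ε₂ ρ : ℝ),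
      0 < ε₁ → 0 < ε₂ → 0 < ρ →
      (∫ y in Metric.closedBall x₂ (4 * ρ),
          (ε₁ / (ε₁ ^ 2 + ‖y - x₁‖ ^ 2)) ^ (((n : ℝ) - 2) / 2) *
            ((ε₂ / (ε₂ ^ 2 + ‖y - x₂‖ ^ 2)) ^ (((n : ℝ) - 2) / 2) *
              (ε₂ ^ 2 + ‖y - x₂‖ ^ 2) ^ (-(1 : ℝ) / 2)))
        ≤ C * ρ * (ε₁ * ε₂ / (ε₂ ^ 2 + ‖x₁ - x₂‖ ^ 2)) ^ (((n : ℝ) - 2) / 2) := by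
  have : Nonempty (Fin n) := ⟨⟨0, by omega⟩⟩
  set p : ℝ := ((n : ℝ) - 2) / 2
  have hp : 0 ≤ p := by
    have : (3 : ℝ) ≤ n := by exact_mod_cast hn
    simp only [p]
    linarith
  have hdim : (finrank ℝ (EuclideanSpace ℝ (Fin n)) : ℝ) = 2 * p + 2 := by
    simp only [finrank_euclideanSpace_fin, p]
    ring
  have hball : 0 < volume.real (ball (0 : EuclideanSpace ℝ (Fin n)) 1) :=
    ENNReal.toReal_pos (measure_ball_pos volume 0 one_pos).ne' measure_ball_lt_top.ne
  refine ⟨(16 * 8 ^ p + 4 * 4 ^ p) *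
      (n * volume.real (ball (0 : EuclideanSpace ℝ (Fin n)) 1)),
    by positivity, fun x₁ x₂ ε₁ ε₂ ρ hε₁ hε₂ hρ ↦ ?_⟩
  rw [integral_eq_lintegral_of_nonneg_ae (.of_forall fun y ↦ by positivity)
    (by fun_prop : Measurable _).aestronglyMeasurable]
  have key := lintegral_closedBall_interaction_le volume hp hdim x₁ x₂ hε₁ hε₂ hρ.le
  rw [finrank_euclideanSpace_fin] at key
  exact ENNReal.toReal_le_of_le_ofReal (by positivity) key
end

section
/- Let E be a real normed vector space, let x ∈ E, α ∈ ℝ and C₀ > 0, and let u : E → ℝ be differentiable at every point of E ∖ {x} with |u(y)| ≤ C₀ ‖y−x‖^α and ‖Du(y)‖ ≤ C₀ ‖y−x‖^{α−1} for all y ≠ x (Du denoting the Fréchet derivative). Then for every θ with 0 < θ ≤ 1 there exists a constant C₁ > 0, depending only on C₀, α and θ, such that |u(y) − u(z)| ≤ C₁ ‖y−z‖^θ ( ‖y−x‖^{α−θ} + ‖z−x‖^{α−θ} ) for all y, z ∈ E ∖ {x}. (Normed-space case of Lemma B-1 of Almaraz–Sun; the proof distinguishes the cases ‖y−z‖ ≤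 ‖y−x‖/2, where one integrates Du along the segment from y to z, and ‖y−z‖ > ‖y−x‖/2, where the pointwise bounds suffice.) -/
open Real

private lemma aux_rpow13 {s r β : ℝ} (hr : 0 < r) (h1 : r / 2 ≤ s) (h2 : s ≤ 2 * r) :
    s ^ β ≤ 2 ^ |β| * r ^ β := by
  have hs : 0 < s := lt_of_lt_of_le (by linarith) h1
  rcases le_or_gt 0 β with hβ | hβ
  · rw [abs_of_nonneg hβ]
    calc s ^ β ≤ (2 * r) ^ β := Real.rpow_le_rpow hs.le h2 hβ
    _ = 2 ^ β * r ^ β := Real.mul_rpow (by norm_num) hr.le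
  · rw [abs_of_neg hβ]
    calc s ^ β ≤ (r / 2) ^ β := Real.rpow_le_rpow_of_nonpos (by linarith) h1 hβ.le
    _ = r ^ β / 2 ^ β := Real.div_rpow hr.le (by norm_num : (0:ℝ) ≤ 2) β
    _ = 2 ^ (-β) * r ^ β := by
        rw [Real.rpow_neg (by norm_num : (0:ℝ) ≤ 2)]
        ring

/-- Normed-space case of Lemma B-1 of Almaraz–Sun: if `u` is differentiable away from `x`
with `|u(y)| ≤ C₀‖y−x‖^α` and `‖Du(y)‖ ≤ C₀‖y−x‖^{α−1}`, then for any `0 < θ ≤ 1` there is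
`C₁ = C₁(C₀, α, θ) > 0` with
`|u(y) − u(z)| ≤ C₁‖y−z‖^θ (‖y−x‖^{α−θ} + ‖z−x‖^{α−θ})` for `y, z ≠ x`. -/
theorem stmt13 (C₀ α θ : ℝ) (hC₀ : 0 < C₀) (hθ0 : 0 < θ) (hθ1 : θ ≤ 1) :
    ∃ C₁ : ℝ, 0 < C₁ ∧
      ∀ (E : Type*) [NormedAddCommGroup E] [NormedSpace ℝ E] (x : E) (u : E → ℝ),
        (∀ y : E, y ≠ x → DifferentiableAt ℝ u y) →
        (∀ y : E, y ≠ x → |u y| ≤ C₀ * ‖y - x‖ ^ α) →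
        (∀ y : E, y ≠ x → ‖fderiv ℝ u y‖ ≤ C₀ * ‖y - x‖ ^ (α - 1)) →
        ∀ y z : E, y ≠ x → z ≠ x →
          |u y - u z| ≤ C₁ * ‖y - z‖ ^ θ * (‖y - x‖ ^ (α - θ) + ‖z - x‖ ^ (α - θ)) := by
  have h2 : (0:ℝ) < 2 ^ |α - 1| := Real.rpow_pos_of_pos (by norm_num) _
  have h3 : (0:ℝ) < 3 ^ θ := Real.rpow_pos_of_pos (by norm_num) _
  refine ⟨C₀ * (2 ^ |α - 1| + 3 ^ θ), by positivity, ?_⟩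
  intro E _ _ x u hdiff hu hdu y z hy hz
  have hyx : (0:ℝ) < ‖y - x‖ := norm_pos_iff.mpr (sub_ne_zero.mpr hy)
  have hzx : (0:ℝ) < ‖z - x‖ := norm_pos_iff.mpr (sub_ne_zero.mpr hz)
  have hA : (0:ℝ) ≤ ‖y - x‖ ^ (α - θ) := (Real.rpow_pos_of_pos hyx _).le
  have hB : (0:ℝ) ≤ ‖z - x‖ ^ (α - θ) := (Real.rpow_pos_of_pos hzx _).le
  rcases le_or_gt ‖y - z‖ (‖y - x‖ / 2) with hcase | hcase
  · -- Case 1: y and z are close; integrate the derivative along the segment.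
    by_cases hyz : y = z
    · subst hyz
      simp only [sub_self, abs_zero]
      positivity
    have hyzn : (0:ℝ) < ‖y - z‖ := norm_pos_iff.mpr (sub_ne_zero.mpr hyz)
    have hseg : ∀ w ∈ segment ℝ y z, ‖y - x‖ / 2 ≤ ‖w - x‖ ∧ ‖w - x‖ ≤ 2 * ‖y - x‖ := by
      intro w hw
      obtain ⟨a, b, ha, hb, hab, rfl⟩ := hw
      have hwy : ‖(a • y + b • z) - y‖ ≤ ‖y - z‖ := by
        have : (a • y + b • z) - y = b • (z - y) := by
          have ha' : a = 1 - b := by linarith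
          subst ha'
          rw [smul_sub, sub_smul, one_smul]
          abel
        rw [this, norm_smul, Real.norm_eq_abs, abs_of_nonneg hb, ← norm_neg (z - y),
          neg_sub]
        nlinarith [norm_nonneg (y - z)]
      constructor
      · have htri : ‖y - x‖ ≤ ‖y - (a • y + b • z)‖ + ‖(a • y + b • z) - x‖ := by
          have := norm_add_le (y - (a • y + b • z)) ((a • y + b • z) - x)
          simpa using this
        have : ‖y - (a • y + b • z)‖ ≤ ‖y - z‖ := by
          rw [← norm_neg, neg_sub]; exact hwy
        linarith
      · have htri : ‖(a • y + b • z) - x‖ ≤ ‖(a • y + b • z) - y‖ + ‖y - x‖ := by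
          have := norm_add_le ((a • y + b • z) - y) (y - x)
          simpa using this
        linarith
    have hne : ∀ w ∈ segment ℝ y z, w ≠ x := by
      intro w hw h
      have := (hseg w hw).1
      rw [h, sub_self, norm_zero] at this
      linarith
    have hbound : ∀ w ∈ segment ℝ y z,
        ‖fderiv ℝ u w‖ ≤ C₀ * (2 ^ |α - 1| * ‖y - x‖ ^ (α - 1)) := by
      intro w hw
      refine (hdu w (hne w hw)).trans ?_
      have := aux_rpow13 (β := α - 1) hyx (hseg w hw).1 (hseg w hw).2
      nlinarith [this]
    have hmv := (convex_segment y z).norm_image_sub_le_of_norm_fderiv_le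
      (fun w hw => hdiff w (hne w hw)) hbound
      (right_mem_segment ℝ y z) (left_mem_segment ℝ y z)
    -- hmv : ‖u y - u z‖ ≤ C * ‖y - z‖
    rw [Real.norm_eq_abs] at hmv
    have hsplit : ‖y - z‖ = ‖y - z‖ ^ θ * ‖y - z‖ ^ (1 - θ) := by
      rw [← Real.rpow_add hyzn]
      norm_num
    have h1θ : ‖y - z‖ ^ (1 - θ) ≤ ‖y - x‖ ^ (1 - θ) :=
      Real.rpow_le_rpow (norm_nonneg _) (by linarith) (by linarith)
    have hmul : ‖y - x‖ ^ (α - 1) * ‖y - x‖ ^ (1 - θ) = ‖y - x‖ ^ (α - θ) := by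
      rw [← Real.rpow_add hyx]; ring_nf
    have hzθ : (0:ℝ) < ‖y - z‖ ^ θ := Real.rpow_pos_of_pos hyzn _
    have hα1 : (0:ℝ) ≤ ‖y - x‖ ^ (α - 1) := (Real.rpow_pos_of_pos hyx _).le
    calc |u y - u z| ≤ C₀ * (2 ^ |α - 1| * ‖y - x‖ ^ (α - 1)) * ‖y - z‖ := hmv
      _ = C₀ * 2 ^ |α - 1| * ‖y - z‖ ^ θ * (‖y - x‖ ^ (α - 1) * ‖y - z‖ ^ (1 - θ)) := by
          nth_rewrite 1 [hsplit]; ring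
      _ ≤ C₀ * 2 ^ |α - 1| * ‖y - z‖ ^ θ * (‖y - x‖ ^ (α - 1) * ‖y - x‖ ^ (1 - θ)) := by
          have : (0:ℝ) ≤ C₀ * 2 ^ |α - 1| * ‖y - z‖ ^ θ := by positivity
          nlinarith [mul_le_mul_of_nonneg_left h1θ hα1]
      _ = C₀ * 2 ^ |α - 1| * ‖y - z‖ ^ θ * ‖y - x‖ ^ (α - θ) := by rw [hmul]
      _ ≤ C₀ * (2 ^ |α - 1| + 3 ^ θ) * ‖y - z‖ ^ θ * (‖y - x‖ ^ (α - θ) + ‖z - x‖ ^ (α - θ)) := by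
          nlinarith [mul_pos (mul_pos hC₀ h3) hzθ, mul_pos (mul_pos hC₀ h2) hzθ]
  · -- Case 2: y and z are far apart; use the pointwise bound directly.
    have hyzn : (0:ℝ) < ‖y - z‖ := by linarith
    have key : ∀ w : E, w ≠ x → ‖w - x‖ ≤ 3 * ‖y - z‖ →
        |u w| ≤ C₀ * 3 ^ θ * ‖y - z‖ ^ θ * ‖w - x‖ ^ (α - θ) := by
      intro w hw hle
      have hwx : (0:ℝ) < ‖w - x‖ := norm_pos_iff.mpr (sub_ne_zero.mpr hw)
      have h1 : |u w| ≤ C₀ * ‖w - x‖ ^ α := hu w hw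
      have h2' : ‖w - x‖ ^ α = ‖w - x‖ ^ (α - θ) * ‖w - x‖ ^ θ := by
        rw [← Real.rpow_add hwx]; ring_nf
      have h3' : ‖w - x‖ ^ θ ≤ 3 ^ θ * ‖y - z‖ ^ θ := by
        calc ‖w - x‖ ^ θ ≤ (3 * ‖y - z‖) ^ θ :=
              Real.rpow_le_rpow (norm_nonneg _) hle hθ0.le
          _ = 3 ^ θ * ‖y - z‖ ^ θ := Real.mul_rpow (by norm_num) (norm_nonneg _)
      have hwα : (0:ℝ) ≤ ‖w - x‖ ^ (α - θ) := (Real.rpow_pos_of_pos hwx _).le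
      calc |u w| ≤ C₀ * (‖w - x‖ ^ (α - θ) * ‖w - x‖ ^ θ) := by rw [← h2']; exact h1
        _ ≤ C₀ * (‖w - x‖ ^ (α - θ) * (3 ^ θ * ‖y - z‖ ^ θ)) := by
            nlinarith [mul_le_mul_of_nonneg_left h3' hwα]
        _ = C₀ * 3 ^ θ * ‖y - z‖ ^ θ * ‖w - x‖ ^ (α - θ) := by ring
    have hky : |u y| ≤ C₀ * 3 ^ θ * ‖y - z‖ ^ θ * ‖y - x‖ ^ (α - θ) :=
      key y hy (by linarith)
    have hkz : |u z| ≤ C₀ * 3 ^ θ * ‖y - z‖ ^ θ * ‖z - x‖ ^ (α - θ) := by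
      refine key z hz ?_
      have htri : ‖z - x‖ ≤ ‖z - y‖ + ‖y - x‖ := by
        have := norm_add_le (z - y) (y - x); simpa using this
      have : ‖z - y‖ = ‖y - z‖ := by rw [← norm_neg, neg_sub]
      linarith
    have htri : |u y - u z| ≤ |u y| + |u z| := abs_sub _ _
    have hzθ : (0:ℝ) < ‖y - z‖ ^ θ := Real.rpow_pos_of_pos hyzn _
    calc |u y - u z| ≤ |u y| + |u z| := htri
      _ ≤ C₀ * 3 ^ θ * ‖y - z‖ ^ θ * (‖y - x‖ ^ (α - θ) + ‖z - x‖ ^ (α - θ)) := by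
          linarith
      _ ≤ C₀ * (2 ^ |α - 1| + 3 ^ θ) * ‖y - z‖ ^ θ * (‖y - x‖ ^ (α - θ) + ‖z - x‖ ^ (α - θ)) := by
          nlinarith [mul_pos (mul_pos hC₀ h2) hzθ]
end

section
/- Let 0 < γ < 1, c > 0 and t₀ ∈ ℝ, and let f : ℝ → ℝ be differentiable on [t₀, ∞) with f(t) ≥ 0 and f′(t) ≤ −c · f(t)^{2/(1+γ)} for all t ≥ t₀. Then there exists a constant C > 0, depending only on c and γ, such that f(t) ≤ C (t − t₀)^{−(1+γ)/(1−γ)} for all t > t₀; indeed one may take C = ( c(1−γ)/(1+γ) )^{−(1+γ)/(1−γ)}. (Differential-inequality decay estimate established in the proof of Proposition 5.2 of Almaraz–Sun, by showing (d/dt) f^{−(1−γ)/(1+γ)} ≥ c(1−γ)/(1+γ) wherever f > 0.) -/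
/-!
Put `p = 2/(1+γ) > 1`. Wherever `f > 0`, the chain rule and `f′ ≤ -c f^p` give
`(f^(1-p))′ = (1-p) f^(-p) f′ ≥ (p-1) c`, so `f^(1-p)` grows at least linearly with slope
`(p-1) c`. Since `f′ ≤ 0`, `f` is nonincreasing, hence `f(t) > 0` forces `f > 0` on all of
`[t₀, t]`, and then `f(t)^(1-p) ≥ (p-1) c (t - t₀)`; this is the bound, as `1 - p < 0`.
-/

open Set Real

theorem le_deriv_rpow_one_sub_of_deriv_le {f : ℝ → ℝ} {x c p : ℝ} (hp : 1 < p) (hfx : 0 < f x)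
    (hf : DifferentiableAt ℝ f x) (hf' : deriv f x ≤ -c * f x ^ p) :
    (p - 1) * c ≤ deriv (fun y => f y ^ (1 - p)) x := by
  rw [(hf.hasDerivAt.rpow_const (Or.inl hfx.ne')).deriv]
  have hcancel : f x ^ (-p) * f x ^ p = 1 := by
    rw [← rpow_add hfx, neg_add_cancel, rpow_zero]
  have hfactor : (1 - p) * f x ^ (-p) ≤ 0 :=
    mul_nonpos_of_nonpos_of_nonneg (by linarith) (rpow_nonneg hfx.le _)
  calc (p - 1) * c = (1 - p) * f x ^ (-p) * (-c * f x ^ p) := by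
        linear_combination (1 - p) * c * hcancel
    _ ≤ (1 - p) * f x ^ (-p) * deriv f x := mul_le_mul_of_nonpos_left hf' hfactor
    _ = deriv f x * (1 - p) * f x ^ (1 - p - 1) := by ring_nf

theorem mul_sub_le_rpow_one_sub_sub_of_deriv_le {f : ℝ → ℝ} {a b c p : ℝ} (hp : 1 < p)
    (hab : a ≤ b) (hcont : ContinuousOn f (Icc a b)) (hdiff : DifferentiableOn ℝ f (Ioo a b))
    (hpos : ∀ x ∈ Icc a b, 0 < f x) (hf' : ∀ x ∈ Ioo a b, deriv f x ≤ -c * f x ^ p) :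
    (p - 1) * c * (b - a) ≤ f b ^ (1 - p) - f a ^ (1 - p) := by
  have hdiffAt : ∀ x ∈ Ioo a b, DifferentiableAt ℝ f x := fun x hx =>
    hdiff.differentiableAt (isOpen_Ioo.mem_nhds hx)
  refine (convex_Icc a b).mul_sub_le_image_sub_of_le_deriv
    (hcont.rpow_const fun x hx => Or.inl (hpos x hx).ne') ?_ ?_ a (left_mem_Icc.2 hab) b
    (right_mem_Icc.2 hab) hab
  · rw [interior_Icc]
    exact fun x hx => ((hdiffAt x hx).rpow_const
      (Or.inl (hpos x (Ioo_subset_Icc_self hx)).ne')).differentiableWithinAt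
  · rw [interior_Icc]
    exact fun x hx => le_deriv_rpow_one_sub_of_deriv_le hp (hpos x (Ioo_subset_Icc_self hx))
      (hdiffAt x hx) (hf' x hx)

theorem le_rpow_inv_of_deriv_le_neg_mul_rpow {f : ℝ → ℝ} {t₀ c p : ℝ} (hp : 1 < p) (hc : 0 < c)
    (hcont : ContinuousOn f (Ici t₀)) (hdiff : DifferentiableOn ℝ f (Ioi t₀))
    (hf0 : ∀ t, t₀ ≤ t → 0 ≤ f t) (hf' : ∀ t, t₀ < t → deriv f t ≤ -c * f t ^ p)
    {t : ℝ} (ht : t₀ < t) :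
    f t ≤ ((p - 1) * c * (t - t₀)) ^ (1 - p)⁻¹ := by
  rcases (hf0 t ht.le).eq_or_lt with hzero | hpos
  · rw [← hzero]
    positivity
  have hanti : AntitoneOn f (Ici t₀) := by
    refine antitoneOn_of_deriv_nonpos (convex_Ici t₀) hcont (by rwa [interior_Ici]) ?_
    rw [interior_Ici]
    exact fun x hx => (hf' x hx).trans
      (mul_nonpos_of_nonpos_of_nonneg (neg_nonpos.2 hc.le) (rpow_nonneg (hf0 x hx.le) p))
  have hposIcc : ∀ x ∈ Icc t₀ t, 0 < f x := fun x hx =>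
    hpos.trans_le (hanti hx.1 (hx.1.trans hx.2) hx.2)
  have hgrowth := mul_sub_le_rpow_one_sub_sub_of_deriv_le hp ht.le
    (hcont.mono Icc_subset_Ici_self) (hdiff.mono Ioo_subset_Ioi_self) hposIcc
    fun x hx => hf' x hx.1
  rw [le_rpow_inv_iff_of_neg hpos (mul_pos (mul_pos (sub_pos.2 hp) hc) (sub_pos.2 ht))
    (by linarith)]
  linarith [rpow_nonneg (hf0 t₀ le_rfl) (1 - p)]

/-- Differential-inequality decay estimate from the proof of Proposition 5.2 of
Almaraz–Sun: if `f ≥ 0` is differentiable on `[t₀, ∞)` with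
`f′(t) ≤ −c f(t)^{2/(1+γ)}` there, `0 < γ < 1`, `c > 0`, then for all `t > t₀`,
`f(t) ≤ C (t−t₀)^{−(1+γ)/(1−γ)}` with `C = (c(1−γ)/(1+γ))^{−(1+γ)/(1−γ)}`. -/
theorem stmt14 (γ c t₀ : ℝ) (hγ0 : 0 < γ) (hγ1 : γ < 1) (hc : 0 < c) (f : ℝ → ℝ)
    (hdiff : DifferentiableOn ℝ f (Set.Ici t₀))
    (hf0 : ∀ t, t₀ ≤ t → 0 ≤ f t)
    (hf' : ∀ t, t₀ ≤ t → derivWithin f (Set.Ici t₀) t ≤ -c * f t ^ (2 / (1 + γ))) :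
    ∀ t, t₀ < t →
      f t ≤ (c * (1 - γ) / (1 + γ)) ^ (-(1 + γ) / (1 - γ)) *
        (t - t₀) ^ (-(1 + γ) / (1 - γ)) := by
  intro t ht
  have hγ : 0 < 1 + γ := by linarith
  have hp : 1 < 2 / (1 + γ) := by
    rw [lt_div_iff₀ hγ]
    linarith
  have hderiv : ∀ x, t₀ < x → deriv f x ≤ -c * f x ^ (2 / (1 + γ)) := fun x hx => by
    rw [← derivWithin_of_mem_nhds (Ici_mem_nhds hx)]
    exact hf' x hx.le
  have key := le_rpow_inv_of_deriv_le_neg_mul_rpow hp hc hdiff.continuousOn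
    (hdiff.mono Ioi_subset_Ici_self) hf0 hderiv ht
  have hexp : (1 - 2 / (1 + γ))⁻¹ = -(1 + γ) / (1 - γ) := by
    rw [show 1 - 2 / (1 + γ) = -((1 - γ) / (1 + γ)) by field_simp; ring, inv_neg, inv_div,
      neg_div]
  have hbase : (2 / (1 + γ) - 1) * c = c * (1 - γ) / (1 + γ) := by
    field_simp
    ring
  rwa [hexp, hbase, mul_rpow (by positivity) (sub_pos.2 ht).le] at key
end
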